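/- arXiv:2412.19144 — 3 statements merged into one kernel-verified Lean document; each statement's English description precedes it below -/
import Mathlib

section
/- Let G be a connected graph with at least one edge, T a connected bipartite graph, f : G → T a graph homomorphism, and η a multi-homomorphism from G to T lying in the same connected component of the poset Hom(G,T) as f. Then for every x ∈ V(G) and every y ∈ η(x), the graph distance d_T(f(x), y) is even. -/
structure Graph' where
  V : Type
  E : V → V → Prop
  symm : ∀ {x y}, E x y → E y x

def IsGraphHom (G H : Graph') (f : G.V → H.V) : Prop :=
  ∀ {x y}, G.E x y → H.E (f x) (f y)

structure Walk (G : Graph') (a b : G.V) where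
  len : ℕ
  toFun : ℕ → G.V
  start_eq : toFun 0 = a
  end_eq : toFun len = b
  adj : ∀ i, i < len → G.E (toFun i) (toFun (i + 1))

structure MultiHom (G H : Graph') where
  toFun : G.V → Set H.V
  nonempty : ∀ x, (toFun x).Nonempty
  edge : ∀ {x y}, G.E x y → ∀ a ∈ toFun x, ∀ b ∈ toFun y, H.E a b

def MultiHom.le {G H : Graph'} (η η' : MultiHom G H) : Prop :=
  ∀ x, η.toFun x ⊆ η'.toFun x

def SameComponent {G H : Graph'} (η η' : MultiHom G H) : Prop :=
  Relation.ReflTransGen (fun a b => MultiHom.le a b ∨ MultiHom.le b a) η η'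

def ofHom {G H : Graph'} (f : G.V → H.V) (hf : IsGraphHom G H f) : MultiHom G H where
  toFun x := {f x}
  nonempty x := ⟨f x, rfl⟩
  edge := by
    intro x y hxy a ha b hb
    rw [Set.mem_singleton_iff] at ha hb
    subst ha; subst hb
    exact hf hxy

def prodI (G : Graph') (n : ℕ) : Graph' where
  V := G.V × Fin (n + 1)
  E := fun p q => G.E p.1 q.1 ∧ p.2.val ≤ q.2.val + 1 ∧ q.2.val ≤ p.2.val + 1
  symm := by
    rintro p q ⟨h1, h2, h3⟩
    exact ⟨G.symm h1, h3, h2⟩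

def MoveA {G : Graph'} {a b : G.V} (γ δ : Walk G a b) : Prop :=
  δ.len = γ.len + 2 ∧ ∃ k ≤ γ.len,
    (∀ i ≤ k, δ.toFun i = γ.toFun i) ∧
    (∀ i, k ≤ i → i ≤ γ.len → δ.toFun (i + 2) = γ.toFun i)

def MoveB {G : Graph'} {a b : G.V} (γ δ : Walk G a b) : Prop :=
  γ.len = δ.len ∧ ∃ j, ∀ i ≤ γ.len, i ≠ j → γ.toFun i = δ.toFun i

def Eqv1 {G : Graph'} {a b : G.V} : Walk G a b → Walk G a b → Prop :=
  Relation.EqvGen MoveA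

def Eqv2 {G : Graph'} {a b : G.V} : Walk G a b → Walk G a b → Prop :=
  Relation.EqvGen (fun γ δ => MoveA γ δ ∨ MoveB γ δ)

noncomputable def Graph'.dist (G : Graph') (a b : G.V) : ℕ :=
  sInf {n | ∃ γ : Walk G a b, γ.len = n}

def Graph'.Connected (G : Graph') : Prop := ∀ a b : G.V, Nonempty (Walk G a b)

def Graph'.Bipartite (G : Graph') : Prop :=
  ∃ c : G.V → ZMod 2, ∀ {x y}, G.E x y → c x ≠ c y

def constWalk {G : Graph'} (a : G.V) : Walk G a a :=
  ⟨0, fun _ => a, rfl, rfl, fun i hi => absurd hi (by omega)⟩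

def Walk.concat {G : Graph'} {a b c : G.V} (γ : Walk G a b) (δ : Walk G b c) :
    Walk G a c where
  len := γ.len + δ.len
  toFun i := if i ≤ γ.len then γ.toFun i else δ.toFun (i - γ.len)
  start_eq := by simp [γ.start_eq]
  end_eq := by
    by_cases h : δ.len = 0
    · have hbc : b = c := by
        have h1 := δ.end_eq
        rw [h, δ.start_eq] at h1
        exact h1
      simp [h, γ.end_eq, hbc]
    · have h1 : ¬ (γ.len + δ.len ≤ γ.len) := by omega
      try dsimp only
      rw [if_neg h1]
      have h2 : γ.len + δ.len - γ.len = δ.len := by omega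
      rw [h2, δ.end_eq]
  adj := by
    intro i hi
    try dsimp only
    rcases lt_trichotomy i γ.len with h | h | h
    · rw [if_pos (by omega : i ≤ γ.len), if_pos (by omega : i + 1 ≤ γ.len)]
      exact γ.adj i h
    · have hδ : 0 < δ.len := by omega
      rw [if_pos (by omega : i ≤ γ.len), if_neg (by omega : ¬ i + 1 ≤ γ.len)]
      have h2 : i + 1 - γ.len = 1 := by omega
      rw [h2, h, γ.end_eq]
      have h3 := δ.adj 0 hδ
      rw [δ.start_eq] at h3
      exact h3
    · rw [if_neg (by omega : ¬ i ≤ γ.len), if_neg (by omega : ¬ i + 1 ≤ γ.len)]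
      have h2 : i + 1 - γ.len = (i - γ.len) + 1 := by omega
      rw [h2]
      exact δ.adj (i - γ.len) (by omega)

def Walk.reverse {G : Graph'} {a b : G.V} (γ : Walk G a b) : Walk G b a where
  len := γ.len
  toFun i := γ.toFun (γ.len - i)
  start_eq := by simp [γ.end_eq]
  end_eq := by simp [γ.start_eq]
  adj := by
    intro i hi
    have h1 : γ.len - i = (γ.len - (i + 1)) + 1 := by omega
    have h2 := γ.adj (γ.len - (i + 1)) (by omega)
    rw [← h1] at h2
    exact G.symm h2

def Walk.map {G H : Graph'} (f : G.V → H.V) (hf : IsGraphHom G H f) {a b : G.V}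
    (γ : Walk G a b) : Walk H (f a) (f b) where
  len := γ.len
  toFun i := f (γ.toFun i)
  start_eq := by (try dsimp only); rw [γ.start_eq]
  end_eq := by (try dsimp only); rw [γ.end_eq]
  adj := fun i hi => hf (γ.adj i hi)

def Walk.pow {G : Graph'} {a : G.V} (γ : Walk G a a) : ℕ → Walk G a a
  | 0 => constWalk a
  | n + 1 => (Walk.pow γ n).concat γ

def Walk.zpow {G : Graph'} {a : G.V} (γ : Walk G a a) : ℤ → Walk G a a
  | Int.ofNat n => γ.pow n
  | Int.negSucc n => γ.reverse.pow (n + 1)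
def finClip (n t : ℕ) : Fin (n + 1) := ⟨min t n, by omega⟩

def realizedWalk {G H : Graph'} {n : ℕ} (h : (prodI G n).V → H.V)
    (hh : IsGraphHom (prodI G n) H h) {v v' : G.V} (hvv' : G.E v v')
    {w : H.V} (h0 : h (v, finClip n 0) = w) (hN : h (v, finClip n n) = w) :
    Walk H w w where
  len := 2 * n
  toFun i := if i % 2 = 0 then h (v, finClip n (i / 2)) else h (v', finClip n (i / 2))
  start_eq := by
    try dsimp only
    rw [if_pos (by norm_num : (0:ℕ) % 2 = 0), Nat.zero_div]
    exact h0
  end_eq := by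
    try dsimp only
    rw [if_pos (by omega : (2 * n) % 2 = 0)]
    have h2 : 2 * n / 2 = n := by omega
    rw [h2]
    exact hN
  adj := by
    intro i hi
    try dsimp only
    rcases Nat.even_or_odd i with he | ho
    · obtain ⟨t, ht⟩ := he
      rw [if_pos (by omega : i % 2 = 0), if_neg (by omega : ¬ (i + 1) % 2 = 0)]
      have h4 : (i + 1) / 2 = i / 2 := by omega
      rw [h4]
      refine hh ⟨hvv', ?_, ?_⟩ <;> (try dsimp only; omega)
    · obtain ⟨t, ht⟩ := ho
      rw [if_neg (by omega : ¬ i % 2 = 0), if_pos (by omega : (i + 1) % 2 = 0)]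
      refine hh ⟨G.symm hvv', ?_, ?_⟩ <;> (dsimp only [finClip]; omega)

def Realizable {G H : Graph'} (f : G.V → H.V) (v : G.V) (ω : Walk H (f v) (f v)) : Prop :=
  ∃ (n : ℕ) (h : (prodI G n).V → H.V) (hh : IsGraphHom (prodI G n) H h)
    (hs : ∀ x, h (x, finClip n 0) = f x) (he : ∀ x, h (x, finClip n n) = f x)
    (v' : G.V) (_ : G.E v v'),
    Eqv2 ω (realizedWalk h hh ‹G.E v v'› (hs v) (he v))
def SquareFree (G : Graph') : Prop :=
  (∀ x, ¬ G.E x x) ∧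
  ¬ ∃ a b c d : G.V, a ≠ b ∧ a ≠ c ∧ a ≠ d ∧ b ≠ c ∧ b ≠ d ∧ c ≠ d ∧
    G.E a b ∧ G.E b c ∧ G.E c d ∧ G.E d a

def nbhd (G : Graph') (v : G.V) : Set G.V := {y | G.E v y}

def nbhd2 (G : Graph') (v : G.V) : Set G.V := {z | ∃ y, G.E v y ∧ G.E y z}

def IsGraphCovering (G H : Graph') (p : G.V → H.V) : Prop :=
  IsGraphHom G H p ∧ ∀ v : G.V, Set.BijOn p (nbhd G v) (nbhd H (p v))

def Is2CoveringMap (G H : Graph') (p : G.V → H.V) : Prop :=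
  IsGraphHom G H p ∧ ∀ v : G.V,
    Set.BijOn p (nbhd G v) (nbhd H (p v)) ∧ Set.BijOn p (nbhd2 G v) (nbhd2 H (p v))

def pushforward {G H1 H2 : Graph'} (p : H1.V → H2.V) (hp : IsGraphHom H1 H2 p)
    (η : MultiHom G H1) : MultiHom G H2 where
  toFun x := p '' η.toFun x
  nonempty x := (η.nonempty x).image p
  edge := by
    rintro x y hxy a ⟨a', ha', rfl⟩ b ⟨b', hb', rfl⟩
    exact hp (η.edge hxy a' ha' b' hb')

def IsCycleWalk {G : Graph'} {a : G.V} (γ : Walk G a a) : Prop :=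
  3 ≤ γ.len ∧ ∀ i j, i < γ.len → j < γ.len → γ.toFun i = γ.toFun j → i = j

def IsTree (T : Graph') : Prop :=
  (∀ x, ¬ T.E x x) ∧ (∀ a b : T.V, Nonempty (Walk T a b)) ∧
    ∀ (a : T.V) (γ : Walk T a a), ¬ IsCycleWalk γ

def IsPath {G : Graph'} {a b : G.V} (γ : Walk G a b) : Prop :=
  ∀ i j, i ≤ γ.len → j ≤ γ.len → γ.toFun i = γ.toFun j → i = j

def OnWalk {G : Graph'} {a b : G.V} (γ : Walk G a b) (y : G.V) : Prop :=
  ∃ i ≤ γ.len, γ.toFun i = y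

def CrossHomotopic (G H : Graph') (f g : G.V → H.V) : Prop :=
  ∃ (n : ℕ) (h : (prodI G n).V → H.V), IsGraphHom (prodI G n) H h ∧
    (∀ x, h (x, finClip n 0) = f x) ∧ (∀ x, h (x, finClip n n) = g x)

def quotGraph (G : Graph') (Γ : Type) [Group Γ] [MulAction Γ G.V] : Graph' where
  V := Quotient (MulAction.orbitRel Γ G.V)
  E := fun α β => ∃ x y : G.V, Quotient.mk (MulAction.orbitRel Γ G.V) x = α ∧
        Quotient.mk (MulAction.orbitRel Γ G.V) y = β ∧ G.E x y
  symm := by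
    rintro α β ⟨x, y, hx, hy, hxy⟩
    exact ⟨y, x, hy, hx, G.symm hxy⟩

/-! A proper 2-colouring `c` of `T` is constant on every `η x` for `η` in the component of `f`, since
moving up in `Hom(G,T)` cannot add a vertex of the other colour to `η x` (all of `η x` is adjacent to
the nonempty `η x'` for a neighbour `x'` of `x`). So `y` has the colour of `f x`, and then every walk
from `f x` to `y` has even length. -/

lemma ZMod.two_eq_add_one_of_ne {a b : ZMod 2} (h : a ≠ b) : b = a + 1 := by
  revert a b; decide

section Coloring

variable {T : Graph'} {c : T.V → ZMod 2}

lemma Walk.color_toFun (hc : ∀ {x y}, T.E x y → c x ≠ c y) {a b : T.V} (γ : Walk T a b) :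
    ∀ i ≤ γ.len, c (γ.toFun i) = c a + i := by
  intro i
  induction i with
  | zero => intro _; simp [γ.start_eq]
  | succ i ih =>
    intro hi
    rw [ZMod.two_eq_add_one_of_ne (hc (γ.adj i (by omega))), ih (by omega)]
    push_cast
    ring

lemma Walk.even_len_of_color_eq (hc : ∀ {x y}, T.E x y → c x ≠ c y) {a b : T.V}
    (γ : Walk T a b) (hab : c a = c b) : Even γ.len := by
  have hend := γ.color_toFun hc γ.len le_rfl
  rw [γ.end_eq, ← hab, left_eq_add] at hend
  exact ZMod.natCast_eq_zero_iff_even.mp hend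

lemma MultiHom.color_eq_of_mem {G : Graph'} (hc : ∀ {x y}, T.E x y → c x ≠ c y)
    (μ : MultiHom G T) {x x' : G.V} (hxx' : G.E x x') {a b : T.V}
    (ha : a ∈ μ.toFun x) (hb : b ∈ μ.toFun x) : c a = c b := by
  obtain ⟨w, hw⟩ := μ.nonempty x'
  have hwa := ZMod.two_eq_add_one_of_ne (hc (μ.edge hxx' a ha w hw))
  have hwb := ZMod.two_eq_add_one_of_ne (hc (μ.edge hxx' b hb w hw))
  exact add_right_cancel (hwa.symm.trans hwb)

lemma SameComponent.color_eq {G : Graph'} (hc : ∀ {x y}, T.E x y → c x ≠ c y)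
    (hnbr : ∀ x : G.V, ∃ x', G.E x x') {f : G.V → T.V} {hf : IsGraphHom G T f}
    {μ : MultiHom G T} (hμ : SameComponent (ofHom f hf) μ) :
    ∀ x, ∀ y ∈ μ.toFun x, c y = c (f x) := by
  induction hμ with
  | refl => rintro x y rfl; rfl
  | @tail μ₁ μ₂ _ hle ih =>
    intro x y hy
    rcases hle with hle | hle
    · obtain ⟨x', hxx'⟩ := hnbr x
      obtain ⟨y₀, hy₀⟩ := μ₁.nonempty x
      rw [μ₂.color_eq_of_mem hc hxx' hy (hle x hy₀), ih x y₀ hy₀]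
    · exact ih x y (hle x hy)

end Coloring

lemma Graph'.Connected.exists_adj {G : Graph'} (hG : G.Connected) (hGe : ∃ x y : G.V, G.E x y)
    (x : G.V) : ∃ x', G.E x x' := by
  obtain ⟨u, v, huv⟩ := hGe
  obtain ⟨γ⟩ := hG u x
  rcases Nat.eq_zero_or_pos γ.len with hlen | hlen
  · have hux : u = x := γ.start_eq.symm.trans (hlen ▸ γ.end_eq)
    exact ⟨v, hux ▸ huv⟩
  · have hadj := γ.adj (γ.len - 1) (by omega)
    rw [Nat.sub_add_cancel hlen, γ.end_eq] at hadj
    exact ⟨_, G.symm hadj⟩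

lemma Graph'.even_dist_of_forall_walk {G : Graph'} {a b : G.V}
    (h : ∀ γ : Walk G a b, Even γ.len) : Even (G.dist a b) := by
  rcases Set.eq_empty_or_nonempty {n | ∃ γ : Walk G a b, γ.len = n} with hempty | hne
  · rw [Graph'.dist, hempty, Nat.sInf_empty]
    exact Even.zero
  · obtain ⟨γ, hγ⟩ := Nat.sInf_mem hne
    rw [Graph'.dist, ← hγ]
    exact h γ

theorem statement_4_general (G T : Graph') (hGconn : Graph'.Connected G)
    (hGe : ∃ x y : G.V, G.E x y)
    (hTbip : Graph'.Bipartite T)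
    (f : G.V → T.V) (hf : IsGraphHom G T f) (η : MultiHom G T)
    (hη : SameComponent (ofHom f hf) η) :
    ∀ x : G.V, ∀ y ∈ η.toFun x, Even (T.dist (f x) y) := by
  obtain ⟨c, hc⟩ := hTbip
  intro x y hy
  have hcolor : c y = c (f x) := hη.color_eq hc (hGconn.exists_adj hGe) x y hy
  exact Graph'.even_dist_of_forall_walk fun γ => γ.even_len_of_color_eq hc hcolor.symm

theorem statement_4 (G T : Graph') (hGconn : Graph'.Connected G)
    (hGe : ∃ x y : G.V, G.E x y)
    (hTconn : Graph'.Connected T) (hTbip : Graph'.Bipartite T)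
    (f : G.V → T.V) (hf : IsGraphHom G T f) (η : MultiHom G T)
    (hη : SameComponent (ofHom f hf) η) :
    ∀ x : G.V, ∀ y ∈ η.toFun x, Even (T.dist (f x) y) :=
  statement_4_general G T hGconn hGe hTbip f hf η hη
end

section
/- Let G be a graph, T a tree, f : G → T a graph homomorphism, n ≥ 1 an integer, and η a multi-homomorphism from G to T such that d_T(f(z), y) ≤ 2n for every z ∈ V(G) and every y ∈ η(z). Let (x,x′) ∈ E(G) be an edge, suppose u_η(x) = 2n, let y ∈ η(x) satisfy d_T(f(x), y) = 2n, and let P be the unique path in T from f(x) to y. Suppose moreover that there do NOT exist y₀ ∈ η(x) and y′ ∈ η(x′) with d_T(f(x), y₀) = d_T(f(x′), y′) = 2n such that the unique path in T from f(x′) to y′ contains y₀ (i.e., (x,x′) is not a directed edge of η). Then η(x′) consists of a single vertex y′, and y′ lies on P and is the vertex of P immediately preceding its endpoint y. -/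
/-!
We move `T` to a Mathlib `SimpleGraph`, where paths in an acyclic graph are unique and realise the
distance, and the distances of two adjacent vertices from any base point differ by exactly one.
The basic fact is: if `v ~ w` and `d(u, v) + 1 = d(u, w)`, then `v` is the penultimate vertex of
the path from `u` to `w`, since otherwise appending `v` would give a path from `u` to `v` that is
too long.

Let `a = f x`, `a' = f x'` and `y' ∈ η(x')`, so that `a ~ a'` and `y ~ y'`. If `d(a', y) = 2n + 1`,
the path from `a'` to `y` is `a'` followed by `P`, and `d(a', y') ≤ 2n` makes `y'` its penultimate
vertex. If `d(a', y) = 2n - 1`, either `d(a', y') = 2n`, so that `y` lies on the path from `a'` to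
`y'` and `(x, x')` is directed, or `d(a', y') = 2n - 2`, so that `d(a, y') = 2n - 1` and `y'` is
again the penultimate vertex of `P`.
-/

namespace SimpleGraph

variable {V : Type*} {G : SimpleGraph V}

def Walk.ofFun (g : ℕ → V) {n : ℕ} (hg : ∀ i < n, G.Adj (g i) (g (i + 1))) :
    (k : ℕ) → k ≤ n → G.Walk (g 0) (g k)
  | 0, _ => .nil
  | k + 1, hk => (ofFun g hg k (by omega)).concat (hg k (by omega))

@[simp]
theorem Walk.length_ofFun (g : ℕ → V) {n : ℕ} (hg : ∀ i < n, G.Adj (g i) (g (i + 1))) (k : ℕ)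
    (hk : k ≤ n) : (ofFun g hg k hk).length = k := by
  induction k with
  | zero => rfl
  | succ k ih => simp [ofFun, ih]

theorem Walk.getVert_ofFun (g : ℕ → V) {n : ℕ} (hg : ∀ i < n, G.Adj (g i) (g (i + 1)))
    {k : ℕ} (hk : k ≤ n) {i : ℕ} (hi : i ≤ k) : (ofFun g hg k hk).getVert i = g i := by
  induction k with
  | zero => simp [ofFun, Nat.le_zero.mp hi]
  | succ k ih =>
    rw [ofFun, concat_eq_append, getVert_append, length_ofFun]
    split_ifs with hik
    · exact ih _ (by omega)
    · obtain rfl | rfl : i = k ∨ i = k + 1 := by omega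
      all_goals simp

theorem IsAcyclic.length_eq_dist_of_isPath (hG : G.IsAcyclic) {u v : V} {p : G.Walk u v}
    (hp : p.IsPath) : p.length = G.dist u v := by
  obtain ⟨q, hq, hqd⟩ := p.reachable.exists_path_of_dist
  rw [← hqd, Subtype.mk.inj ((hG.subsingleton_path u v).elim ⟨p, hp⟩ ⟨q, hq⟩)]

theorem IsAcyclic.penultimate_eq_of_dist_add_one_eq (hG : G.IsAcyclic) {u v w : V}
    {p : G.Walk u w} (hp : p.IsPath) (hadj : G.Adj v w) (hd : G.dist u v + 1 = G.dist u w) :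
    p.penultimate = v := by
  by_cases hv : v ∈ p.support
  · exact (hG.eq_penultimate_of_adj_end hp hadj.symm hv).symm
  · have hlong := hG.length_eq_dist_of_isPath (hp.concat hv hadj.symm)
    have hshort := hG.length_eq_dist_of_isPath hp
    rw [Walk.length_concat] at hlong
    omega

theorem IsTree.penultimate_eq_or_dist_add_one_eq (hG : G.IsTree) {a a' y y' : V}
    (ha : G.Adj a a') (hy : G.Adj y y') {p : G.Walk a y} (hp : p.IsPath) (hp0 : ¬ p.Nil)
    (hd : G.dist a' y' ≤ p.length) :
    p.penultimate = y' ∨ G.dist a' y + 1 = G.dist a' y' ∧ G.dist a' y' = p.length := by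
  have hpd := hG.isAcyclic.length_eq_dist_of_isPath hp
  have hpos := Walk.not_nil_iff_lt_length.mp hp0
  have h_a'y := hG.dist_eq_dist_add_one_of_adj y ha
  have h_a'y' := hG.dist_eq_dist_add_one_of_adj a' hy
  have h_ay' := hG.dist_eq_dist_add_one_of_adj a hy
  have h_y'a := hG.dist_eq_dist_add_one_of_adj y' ha
  rw [dist_comm (u := y), dist_comm (u := y)] at h_a'y
  rw [dist_comm (u := y'), dist_comm (u := y')] at h_y'a
  rcases h_a'y with h_a'y | h_a'y
  · rcases h_a'y' with h_a'y' | h_a'y'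
    · rcases h_ay' with h_ay' | h_ay'
      · exact .inl (hG.isAcyclic.penultimate_eq_of_dist_add_one_eq hp hy.symm (by omega))
      · omega
    · exact .inr ⟨h_a'y'.symm, by omega⟩
  · have hcons : (Walk.cons ha.symm p).IsPath :=
      Walk.isPath_of_length_eq_dist _ (by rw [Walk.length_cons]; omega)
    rw [← Walk.penultimate_cons_of_not_nil ha.symm p hp0]
    exact .inl (hG.isAcyclic.penultimate_eq_of_dist_add_one_eq hcons hy.symm (by omega))

end SimpleGraph

-- Reducible, so that `G.E` can stand for the adjacency relation of `G.toSimpleGraph hG`.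
abbrev Graph'.toSimpleGraph (G : Graph') (hG : ∀ x, ¬ G.E x x) : SimpleGraph G.V where
  Adj := G.E
  symm := ⟨fun _ _ => G.symm⟩
  loopless := ⟨hG⟩

section ToSimpleGraph

variable {G : Graph'} (hG : ∀ x, ¬ G.E x x) {a b : G.V}

def Walk.toSimpleWalk (γ : Walk G a b) : (G.toSimpleGraph hG).Walk a b :=
  (SimpleGraph.Walk.ofFun γ.toFun γ.adj γ.len le_rfl).copy γ.start_eq γ.end_eq

def Walk.ofSimpleWalk (p : (G.toSimpleGraph hG).Walk a b) : Walk G a b where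
  len := p.length
  toFun := p.getVert
  start_eq := p.getVert_zero
  end_eq := p.getVert_length
  adj _ hi := p.adj_getVert_succ hi

@[simp]
theorem Walk.length_toSimpleWalk (γ : Walk G a b) : (γ.toSimpleWalk hG).length = γ.len := by
  rw [toSimpleWalk, SimpleGraph.Walk.length_copy, SimpleGraph.Walk.length_ofFun]

theorem Walk.getVert_toSimpleWalk (γ : Walk G a b) {i : ℕ} (hi : i ≤ γ.len) :
    (γ.toSimpleWalk hG).getVert i = γ.toFun i := by
  rw [toSimpleWalk, SimpleGraph.Walk.getVert_copy, SimpleGraph.Walk.getVert_ofFun _ _ _ hi]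

theorem Walk.penultimate_toSimpleWalk (γ : Walk G a b) :
    (γ.toSimpleWalk hG).penultimate = γ.toFun (γ.len - 1) := by
  rw [SimpleGraph.Walk.penultimate, length_toSimpleWalk, getVert_toSimpleWalk _ _ (by omega)]

theorem IsPath.isPath_toSimpleWalk {γ : Walk G a b} (hγ : IsPath γ) :
    (γ.toSimpleWalk hG).IsPath := by
  refine (SimpleGraph.Walk.IsPath.getVert_injOn_iff _).mp fun i hi j hj hij => ?_
  simp only [Set.mem_ofPred_eq, Walk.length_toSimpleWalk] at hi hj
  rw [Walk.getVert_toSimpleWalk _ _ hi, Walk.getVert_toSimpleWalk _ _ hj] at hij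
  exact hγ i j hi hj hij

theorem OnWalk.of_mem_support_toSimpleWalk {γ : Walk G a b} {v : G.V}
    (hv : v ∈ (γ.toSimpleWalk hG).support) : OnWalk γ v := by
  obtain ⟨i, hiv, hi⟩ := SimpleGraph.Walk.mem_support_iff_exists_getVert.mp hv
  rw [Walk.length_toSimpleWalk] at hi
  exact ⟨i, hi, (Walk.getVert_toSimpleWalk _ _ hi).symm.trans hiv⟩

theorem Graph'.dist_eq_dist_toSimpleGraph (a b : G.V) :
    G.dist a b = (G.toSimpleGraph hG).dist a b := by
  rw [Graph'.dist, SimpleGraph.dist_eq_sInf]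
  congr 1
  ext m
  constructor
  · rintro ⟨γ, rfl⟩
    exact ⟨γ.toSimpleWalk hG, Walk.length_toSimpleWalk _ _⟩
  · rintro ⟨p, rfl⟩
    exact ⟨Walk.ofSimpleWalk hG p, rfl⟩

end ToSimpleGraph

theorem IsTree.isTree_toSimpleGraph {T : Graph'} (hT : IsTree T) [Nonempty T.V] :
    (T.toSimpleGraph hT.1).IsTree where
  connected := ⟨fun a b => ⟨(hT.2.1 a b).some.toSimpleWalk hT.1⟩⟩
  isAcyclic a c hc := by
    refine hT.2.2 a (Walk.ofSimpleWalk hT.1 c) ⟨hc.three_le_length, fun i j hi hj hij => ?_⟩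
    change i < c.length at hi
    change j < c.length at hj
    exact hc.getVert_injOn' (by simp only [Set.mem_ofPred_eq]; omega)
      (by simp only [Set.mem_ofPred_eq]; omega) hij

theorem statement_7 (G T : Graph') (hT : IsTree T)
    (f : G.V → T.V) (hf : IsGraphHom G T f) (n : ℕ) (hn : 1 ≤ n)
    (η : MultiHom G T)
    (hbound : ∀ z : G.V, ∀ y ∈ η.toFun z, T.dist (f z) y ≤ 2 * n)
    (x x' : G.V) (hxx' : G.E x x')
    (y : T.V) (hy : y ∈ η.toFun x) (hyd : T.dist (f x) y = 2 * n)
    (P : Walk T (f x) y) (hP : IsPath P)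
    (hnd : ¬ ∃ y₀ ∈ η.toFun x, ∃ y' ∈ η.toFun x',
      T.dist (f x) y₀ = 2 * n ∧ T.dist (f x') y' = 2 * n ∧
      ∀ Q : Walk T (f x') y', IsPath Q → OnWalk Q y₀) :
    ∃ y' : T.V, η.toFun x' = {y'} ∧ OnWalk P y' ∧ y' = P.toFun (P.len - 1) := by
  have : Nonempty T.V := ⟨y⟩
  have hH := hT.isTree_toSimpleGraph
  have hdist := Graph'.dist_eq_dist_toSimpleGraph hT.1
  have hp := hP.isPath_toSimpleWalk hT.1
  have hlen : (P.toSimpleWalk hT.1).length = 2 * n := by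
    rw [hH.isAcyclic.length_eq_dist_of_isPath hp, ← hdist, hyd]
  have hpenultimate : ∀ y' ∈ η.toFun x', y' = P.toFun (P.len - 1) := by
    intro y' hy'
    have hyy' := η.edge hxx' y hy y' hy'
    have hd : (T.toSimpleGraph hT.1).dist (f x') y' ≤ (P.toSimpleWalk hT.1).length := by
      rw [hlen, ← hdist]
      exact hbound x' y' hy'
    rw [← Walk.penultimate_toSimpleWalk hT.1]
    refine ((hH.penultimate_eq_or_dist_add_one_eq (hf hxx') hyy' hp
      (SimpleGraph.Walk.not_nil_iff_lt_length.mpr (by omega)) hd).resolve_right ?_).symm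
    rintro ⟨hdirected, hd'⟩
    refine hnd ⟨y, hy, y', hy', hyd, by rw [hdist, hd', hlen], fun Q hQ => ?_⟩
    apply OnWalk.of_mem_support_toSimpleWalk hT.1
    rw [← hH.isAcyclic.penultimate_eq_of_dist_add_one_eq (hQ.isPath_toSimpleWalk hT.1) hyy'
      hdirected]
    exact SimpleGraph.Walk.getVert_mem_support _ _
  obtain ⟨z, hz⟩ := η.nonempty x'
  exact ⟨_, Set.eq_singleton_iff_unique_mem.mpr ⟨hpenultimate z hz ▸ hz, hpenultimate⟩,
    ⟨P.len - 1, Nat.sub_le _ _, rfl⟩, rfl⟩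
end

section
/- Let Γ be a group acting on a graph G (each γ ∈ Γ acts on V(G) preserving the edge relation) such that the action on the vertex set V(G) is free. Then the projection G → G/Γ is a 2-covering map if and only if the action is a 2-covering action, i.e., N²(x) ∩ N²(γx) = ∅ for every x ∈ V(G) and every γ ∈ Γ with γ ≠ 1. -/
/-! The projection is always surjective on `N(v)` and `N²(v)`, because a lift of an edge of the
quotient can be translated to start at any point of the orbit. On `N²(v)` it is injective exactly
under the 2-covering condition: two points `z, γ • z` of `N²(v)` put `γ • z` into
`N²(v) ∩ N²(γ • v)`, and conversely a point of that intersection gives the two points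
`z, γ⁻¹ • z` of `N²(v)`, distinct by freeness. Injectivity on `N(v)` then comes for free, since
`N(v) ⊆ N²(y)` for every `y ∈ N(v)`. -/

theorem nbhd_subset_nbhd2 {G : Graph'} {v y : G.V} (hy : y ∈ nbhd G v) :
    nbhd G v ⊆ nbhd2 G y :=
  fun _ hy' => ⟨v, G.symm hy, hy'⟩

theorem injOn_nbhd_of_forall_injOn_nbhd2 {G : Graph'} {α : Type*} {p : G.V → α}
    (hp : ∀ x, Set.InjOn p (nbhd2 G x)) (v : G.V) : Set.InjOn p (nbhd G v) :=
  fun _ hy _ hy' => hp _ (nbhd_subset_nbhd2 hy' hy) (nbhd_subset_nbhd2 hy' hy')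

namespace IsGraphHom

variable {G H : Graph'} {p : G.V → H.V}

theorem mapsTo_nbhd (hp : IsGraphHom G H p) (v : G.V) :
    Set.MapsTo p (nbhd G v) (nbhd H (p v)) :=
  fun _ hy => hp hy

theorem mapsTo_nbhd2 (hp : IsGraphHom G H p) (v : G.V) :
    Set.MapsTo p (nbhd2 G v) (nbhd2 H (p v)) :=
  fun _ ⟨y, hvy, hyz⟩ => ⟨p y, hp hvy, hp hyz⟩

end IsGraphHom

namespace quotGraph

variable {G : Graph'} {Γ : Type} [Group Γ] [MulAction Γ G.V]

theorem mk_eq_mk_iff {a b : G.V} :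
    Quotient.mk (MulAction.orbitRel Γ G.V) a = Quotient.mk (MulAction.orbitRel Γ G.V) b ↔
      ∃ γ : Γ, γ • b = a :=
  Quotient.eq.trans (MulAction.orbitRel_apply.trans MulAction.mem_orbit_iff)

theorem isGraphHom_mk : IsGraphHom G (quotGraph G Γ) (Quotient.mk (MulAction.orbitRel Γ G.V)) :=
  fun {x y} hxy => ⟨x, y, rfl, rfl, hxy⟩

variable (hact : ∀ γ : Γ, IsGraphHom G G (γ • ·))
include hact

theorem smul_mem_nbhd2 {x z : G.V} (γ : Γ) (hz : z ∈ nbhd2 G x) : γ • z ∈ nbhd2 G (γ • x) :=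
  IsGraphHom.mapsTo_nbhd2 (hact γ) x hz

theorem surjOn_mk_nbhd (v : G.V) :
    Set.SurjOn (Quotient.mk (MulAction.orbitRel Γ G.V)) (nbhd G v)
      (nbhd (quotGraph G Γ) (Quotient.mk _ v)) := by
  rintro _ ⟨x, y, hx, rfl, hxy⟩
  obtain ⟨γ, rfl⟩ := mk_eq_mk_iff.mp hx
  refine ⟨γ⁻¹ • y, by simpa [nbhd] using hact γ⁻¹ hxy, mk_eq_mk_iff.mpr ⟨γ⁻¹, rfl⟩⟩

theorem surjOn_mk_nbhd2 (v : G.V) :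
    Set.SurjOn (Quotient.mk (MulAction.orbitRel Γ G.V)) (nbhd2 G v)
      (nbhd2 (quotGraph G Γ) (Quotient.mk _ v)) := by
  rintro _ ⟨_, ⟨x, y, hx, rfl, hxy⟩, ⟨y', z, hy', rfl, hyz⟩⟩
  obtain ⟨γ, rfl⟩ := mk_eq_mk_iff.mp hx
  obtain ⟨δ, rfl⟩ := mk_eq_mk_iff.mp hy'
  refine ⟨γ⁻¹ • δ⁻¹ • z, ⟨γ⁻¹ • y, ?_, ?_⟩, mk_eq_mk_iff.mpr ⟨γ⁻¹ * δ⁻¹, mul_smul _ _ _⟩⟩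
  · simpa using hact γ⁻¹ hxy
  · exact hact γ⁻¹ (by simpa using hact δ⁻¹ hyz)

theorem is2CoveringMap_mk_iff :
    Is2CoveringMap G (quotGraph G Γ) (Quotient.mk (MulAction.orbitRel Γ G.V)) ↔
      ∀ v : G.V, Set.InjOn (Quotient.mk (MulAction.orbitRel Γ G.V)) (nbhd2 G v) := by
  refine ⟨fun h v => (h.2 v).2.injOn, fun h => ⟨isGraphHom_mk, fun v => ⟨?_, ?_⟩⟩⟩
  · exact ⟨isGraphHom_mk.mapsTo_nbhd v, injOn_nbhd_of_forall_injOn_nbhd2 h v,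
      surjOn_mk_nbhd hact v⟩
  · exact ⟨isGraphHom_mk.mapsTo_nbhd2 v, h v, surjOn_mk_nbhd2 hact v⟩

theorem forall_injOn_mk_nbhd2_iff (hfree : ∀ (γ : Γ) (x : G.V), γ • x = x → γ = 1) :
    (∀ v : G.V, Set.InjOn (Quotient.mk (MulAction.orbitRel Γ G.V)) (nbhd2 G v)) ↔
      ∀ (x : G.V) (γ : Γ), γ ≠ 1 → nbhd2 G x ∩ nbhd2 G (γ • x) = ∅ := by
  refine ⟨fun h x γ hγ => ?_, fun h v z hz z' hz' hzz' => ?_⟩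
  · refine Set.eq_empty_of_forall_notMem fun z ⟨hxz, hγxz⟩ => hγ (inv_eq_one.mp ?_)
    have hz' : γ⁻¹ • z ∈ nbhd2 G x := by simpa using smul_mem_nbhd2 hact γ⁻¹ hγxz
    exact hfree _ _ (h x hxz hz' (mk_eq_mk_iff.mpr ⟨γ, smul_inv_smul γ z⟩)).symm
  · obtain ⟨γ, rfl⟩ := mk_eq_mk_iff.mp hzz'
    by_contra hne
    have hγ : γ ≠ 1 := fun h1 => hne (by rw [h1, one_smul])
    exact (h v γ hγ).subset ⟨hz, smul_mem_nbhd2 hact γ hz'⟩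

end quotGraph

theorem statement_19 (G : Graph') (Γ : Type) [Group Γ] [MulAction Γ G.V]
    (hact : ∀ (γ : Γ) {x y : G.V}, G.E x y → G.E (γ • x) (γ • y))
    (hfree : ∀ (γ : Γ) (x : G.V), γ • x = x → γ = 1) :
    Is2CoveringMap G (quotGraph G Γ)
      (fun x => Quotient.mk (MulAction.orbitRel Γ G.V) x) ↔
    ∀ (x : G.V) (γ : Γ), γ ≠ 1 → nbhd2 G x ∩ nbhd2 G (γ • x) = ∅ :=
  (quotGraph.is2CoveringMap_mk_iff hact).trans (quotGraph.forall_injOn_mk_nbhd2_iff hact hfree)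
end
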